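/- Let G be a finite abelian group whose torsion decomposition is G = ⊕_{p prime} G_p into p-groups. Then the nilpotent residue of the augmentation ideal satisfies ∩_{n≥0} I(ℤ[G])^n = Σ_{p≠q primes} I(ℤ[G_p])·I(ℤ[G_q])·ℤ[G]. In particular, if G is a p-group for a single prime p, then ∩_{n≥0} I(ℤ[G])^n = 0. -/

import Mathlib

open MonoidAlgebra Pointwise

/-- The augmentation homomorphism of the group ring `ℤ[G]`. -/
noncomputable def aug (G : Type*) [Monoid G] : MonoidAlgebra ℤ G →+* ℤ :=
  ((MonoidAlgebra.lift ℤ ℤ G) 1).toRingHom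

/-- The augmentation ideal `I` of the group ring `ℤ[G]`. -/
noncomputable def augIdeal (G : Type*) [CommGroup G] : Ideal (MonoidAlgebra ℤ G) :=
  RingHom.ker (aug G)

section Aux

variable {G : Type*} [CommGroup G]

lemma aug_single (g : G) (r : ℤ) : aug G (MonoidAlgebra.single g r) = r := by
  simp [aug, MonoidAlgebra.lift_single]

lemma aug_of (g : G) : aug G (of ℤ G g) = 1 := by
  simp [aug]

lemma mem_augIdeal_iff (x : MonoidAlgebra ℤ G) : x ∈ augIdeal G ↔ aug G x = 0 :=
  RingHom.mem_ker

lemma of_sub_one_mem (g : G) : of ℤ G g - 1 ∈ augIdeal G := by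
  rw [mem_augIdeal_iff, map_sub, map_one, aug_of, sub_self]

lemma aug_eq_sum (b : MonoidAlgebra ℤ G) : aug G b = ∑ g ∈ b.coeff.support, b.coeff g := by
  simp [aug, MonoidAlgebra.lift_apply, Finsupp.sum]


lemma ord_pow_mul_mem (g : G) (k : ℕ) :
    ((orderOf g : ℤ) : MonoidAlgebra ℤ G) ^ k * (of ℤ G g - 1) ∈ augIdeal G ^ (k + 1) := by
  set N := orderOf g with hN
  set w : MonoidAlgebra ℤ G := ((N : ℤ) : MonoidAlgebra ℤ G) - ∑ i ∈ Finset.range N, of ℤ G g ^ i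
    with hw
  have hwI : w ∈ augIdeal G := by
    rw [mem_augIdeal_iff, hw, map_sub, map_intCast, map_sum]
    have : ∀ i ∈ Finset.range N, aug G (of ℤ G g ^ i) = 1 := by
      intro i _
      rw [map_pow, aug_of, one_pow]
    rw [Finset.sum_congr rfl this, Finset.sum_const, Finset.card_range]
    simp
  have hmul : (of ℤ G g - 1) * w = ((N : ℤ) : MonoidAlgebra ℤ G) * (of ℤ G g - 1) := by
    have hgeom : (∑ i ∈ Finset.range N, of ℤ G g ^ i) * (of ℤ G g - 1) = 0 := by
      rw [geom_sum_mul, ← map_pow, hN, pow_orderOf_eq_one, map_one, sub_self]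
    rw [hw, mul_sub, mul_comm (of ℤ G g - 1) (∑ i ∈ Finset.range N, of ℤ G g ^ i), hgeom,
      sub_zero, mul_comm]
  induction k with
  | zero => simpa using of_sub_one_mem g
  | succ k ih =>
    have : ((N : ℤ) : MonoidAlgebra ℤ G) ^ (k + 1) * (of ℤ G g - 1)
        = (((N : ℤ) : MonoidAlgebra ℤ G) ^ k * (of ℤ G g - 1)) * w := by
      rw [mul_assoc, hmul]; ring
    rw [this, pow_succ]
    exact Ideal.mul_mem_mul ih hwI

lemma dvd_pow_orderOf (p : ℕ) (hp : p.Prime) (g : G) (a : ℕ) (hg : orderOf g = p ^ a) :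
    ((p : ℤ) : MonoidAlgebra ℤ G) ∣ (of ℤ G g - 1) ^ p ^ a := by
  set x : MonoidAlgebra ℤ G := of ℤ G g - 1 with hxdef
  have hx1 : x + 1 = of ℤ G g := by rw [hxdef]; ring
  have hord : (of ℤ G g) ^ p ^ a = 1 := by
    rw [← map_pow, ← hg, pow_orderOf_eq_one, map_one]
  obtain ⟨M, hM⟩ : ∃ M, p ^ a = M + 1 :=
    ⟨p ^ a - 1, (Nat.succ_pred_eq_of_pos (pow_pos hp.pos a)).symm⟩
  have hbin := add_pow x (1 : MonoidAlgebra ℤ G) (p ^ a)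
  rw [hx1, hord] at hbin
  simp only [one_pow, mul_one] at hbin
  rw [Finset.sum_range_succ, Nat.choose_self, Nat.cast_one, mul_one] at hbin
  -- hbin : 1 = (∑ k ∈ range (p^a), x ^ k * C(p^a,k)) + x ^ (p^a)
  have hsum : (∑ k ∈ Finset.range (p ^ a), x ^ k * (Nat.choose (p ^ a) k : MonoidAlgebra ℤ G))
      = (∑ k ∈ Finset.range M, x ^ (k + 1) * (Nat.choose (p ^ a) (k + 1) : MonoidAlgebra ℤ G))
        + 1 := by
    rw [hM, Finset.sum_range_succ']
    simp
  rw [hsum] at hbin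
  have hx : x ^ p ^ a
      = -∑ k ∈ Finset.range M, x ^ (k + 1) * (Nat.choose (p ^ a) (k + 1) : MonoidAlgebra ℤ G) := by
    linear_combination -hbin
  rw [hx]
  apply dvd_neg.mpr
  apply Finset.dvd_sum
  intro k hk
  have hdvd : p ∣ Nat.choose (p ^ a) (k + 1) := by
    apply Nat.Prime.dvd_choose_pow hp (Nat.succ_ne_zero k)
    rw [Finset.mem_range] at hk
    omega
  obtain ⟨d, hd⟩ := hdvd
  rw [hd]
  refine ⟨x ^ (k + 1) * (d : MonoidAlgebra ℤ G), ?_⟩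
  push_cast
  ring


end Aux

/-- The generating set of the ideal `Σ_{p≠q} I_p I_q ℤ[G]`. -/
def Jset (G : Type*) [CommGroup G] : Set (MonoidAlgebra ℤ G) :=
  { x : MonoidAlgebra ℤ G |
    ∃ p q : ℕ, p.Prime ∧ q.Prime ∧ p ≠ q ∧
      ∃ g h : G, (∃ a : ℕ, orderOf g = p ^ a) ∧ (∃ b : ℕ, orderOf h = q ^ b) ∧
        x = (MonoidAlgebra.of ℤ G g - 1) * (MonoidAlgebra.of ℤ G h - 1) }

section Aux2

variable {G : Type*} [CommGroup G]

lemma cross_mem (p : ℕ) (hp : p.Prime) (g : G) (hg : ∃ a, orderOf g = p ^ a)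
    (h : ℕ → G) (s : Finset ℕ) :
    p ∉ s → (∀ q ∈ s, q.Prime) → (∀ q ∈ s, ∃ b, orderOf (h q) = q ^ b) →
      (of ℤ G g - 1) * (of ℤ G (∏ q ∈ s, h q) - 1) ∈ Ideal.span (Jset G) := by
  induction s using Finset.induction_on with
  | empty =>
    intro _ _ _
    rw [Finset.prod_empty, map_one, sub_self, mul_zero]
    exact zero_mem _
  | @insert q s hq ih =>
    intro hps hsp hh
    rw [Finset.prod_insert hq, map_mul]
    have key : (of ℤ G g - 1) * (of ℤ G (h q) * of ℤ G (∏ r ∈ s, h r) - 1)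
        = of ℤ G (h q) * ((of ℤ G g - 1) * (of ℤ G (∏ r ∈ s, h r) - 1))
          + (of ℤ G g - 1) * (of ℤ G (h q) - 1) := by ring
    rw [key]
    apply add_mem
    · exact Ideal.mul_mem_left _ _ (ih (fun hps' => hps (Finset.mem_insert_of_mem hps'))
        (fun r hr => hsp r (Finset.mem_insert_of_mem hr))
        (fun r hr => hh r (Finset.mem_insert_of_mem hr)))
    · apply Ideal.subset_span
      refine ⟨p, q, hp, hsp q (Finset.mem_insert_self q s), ?_, g, h q, hg,
        hh q (Finset.mem_insert_self q s), rfl⟩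
      intro hpq
      exact hps (hpq ▸ Finset.mem_insert_self q s)

lemma dsum_mem (h : ℕ → G) (s : Finset ℕ) :
    (∀ q ∈ s, q.Prime) → (∀ q ∈ s, ∃ b, orderOf (h q) = q ^ b) →
      of ℤ G (∏ q ∈ s, h q) - 1 - ∑ q ∈ s, (of ℤ G (h q) - 1) ∈ Ideal.span (Jset G) := by
  induction s using Finset.induction_on with
  | empty =>
    intro _ _
    rw [Finset.prod_empty, Finset.sum_empty, map_one, sub_self, sub_zero]
    exact zero_mem _
  | @insert p s hp ih =>
    intro h1 h2
    rw [Finset.prod_insert hp, Finset.sum_insert hp, map_mul]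
    have key : of ℤ G (h p) * of ℤ G (∏ q ∈ s, h q) - 1 - (of ℤ G (h p) - 1
        + ∑ q ∈ s, (of ℤ G (h q) - 1))
        = (of ℤ G (h p) - 1) * (of ℤ G (∏ q ∈ s, h q) - 1)
          + (of ℤ G (∏ q ∈ s, h q) - 1 - ∑ q ∈ s, (of ℤ G (h q) - 1)) := by ring
    rw [key]
    apply add_mem
    · exact cross_mem p (h1 p (Finset.mem_insert_self p s)) (h p)
        (h2 p (Finset.mem_insert_self p s)) h s hp
        (fun q hq => h1 q (Finset.mem_insert_of_mem hq))
        (fun q hq => h2 q (Finset.mem_insert_of_mem hq))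
    · exact ih (fun q hq => h1 q (Finset.mem_insert_of_mem hq))
        (fun q hq => h2 q (Finset.mem_insert_of_mem hq))

end Aux2

section Aux3

variable {G : Type*} [CommGroup G] [Fintype G]

lemma pow_dvd_pow_of_span (p : ℕ) (hp : p.Prime) (b : MonoidAlgebra ℤ G)
    (hb : b ∈ Ideal.span
      { y : MonoidAlgebra ℤ G | ∃ g : G, (∃ a, orderOf g = p ^ a) ∧ y = of ℤ G g - 1 })
    (m : ℕ) :
    ((p : ℤ) : MonoidAlgebra ℤ G) ^ m
      ∣ b ^ (Fintype.card G * (Fintype.card G * m)) := by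
  classical
  set c := Fintype.card G with hc
  set n := c * (c * m) with hn
  set T : Set (MonoidAlgebra ℤ G) :=
    { y : MonoidAlgebra ℤ G | ∃ g : G, (∃ a, orderOf g = p ^ a) ∧ y = of ℤ G g - 1 } with hT
  rcases Nat.eq_zero_or_pos m with rfl | hm
  · simp
  have hcpos : 0 < c := Fintype.card_pos
  have hnpos : 0 < n := by positivity
  have h1 : b ^ n ∈ Ideal.span (T ^ n) := by
    have hsp : Ideal.span (T ^ n) = Ideal.span T ^ n := (Submodule.span_pow T n).symm
    rw [hsp]
    exact Ideal.pow_mem_pow hb n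
  have h2 : Ideal.span (T ^ n) ≤ Ideal.span {((p : ℤ) : MonoidAlgebra ℤ G) ^ m} := by
    rw [Ideal.span_le]
    intro y hy
    rw [SetLike.mem_coe, Ideal.mem_span_singleton]
    obtain ⟨f, hf⟩ := Set.mem_pow.mp hy
    rw [List.prod_ofFn] at hf
    choose g hord heq using fun i => (f i).2
    have hy' : y = ∏ i, (of ℤ G (g i) - 1) := by
      rw [← hf]
      exact Finset.prod_congr rfl fun i _ => heq i
    have hmaps : ∀ i ∈ (Finset.univ : Finset (Fin n)), g i ∈ Finset.univ.image g :=
      fun i _ => Finset.mem_image_of_mem g (Finset.mem_univ i)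
    have hne : (Finset.univ.image g).Nonempty := by
      have h : (Finset.univ : Finset (Fin n)).Nonempty := by
        rw [Finset.univ_nonempty_iff]
        exact Fin.pos_iff_nonempty.mp hnpos
      exact h.image g
    have himg : (Finset.univ.image g).card ≤ c := by
      simpa [hc] using Finset.card_le_univ (Finset.univ.image g)
    have hcard : (Finset.univ.image g).card * (c * m)
        ≤ (Finset.univ : Finset (Fin n)).card := by
      rw [Finset.card_univ, Fintype.card_fin]
      exact le_trans (Nat.mul_le_mul_right _ himg) (le_of_eq hn.symm)
    obtain ⟨g₀, hg₀, hfib⟩ :=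
      Finset.exists_le_card_fiber_of_mul_le_card_of_maps_to hmaps hne hcard
    obtain ⟨i₀, -, hi₀⟩ := Finset.mem_image.mp hg₀
    obtain ⟨a, ha⟩ := hord i₀
    have ha₀ : orderOf g₀ = p ^ a := hi₀ ▸ ha
    set fib := Finset.filter (fun i => g i = g₀) Finset.univ with hfibdef
    have hsplit : y = (∏ i ∈ fib, (of ℤ G (g i) - 1))
        * ∏ i ∈ Finset.filter (fun i => ¬ g i = g₀) Finset.univ, (of ℤ G (g i) - 1) := by
      rw [hy', Finset.prod_filter_mul_prod_filter_not]
    have hfprod : ∏ i ∈ fib, (of ℤ G (g i) - 1) = (of ℤ G g₀ - 1) ^ fib.card := by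
      rw [← Finset.prod_const]
      exact Finset.prod_congr rfl fun i hi => by rw [(Finset.mem_filter.mp hi).2]
    have hdvd0 : ((p : ℤ) : MonoidAlgebra ℤ G) ∣ (of ℤ G g₀ - 1) ^ orderOf g₀ := by
      rw [ha₀]
      exact dvd_pow_orderOf p hp g₀ a ha₀
    have hordc : orderOf g₀ ≤ c := Nat.le_of_dvd hcpos orderOf_dvd_card
    have hordle : orderOf g₀ * m ≤ fib.card :=
      le_trans (Nat.mul_le_mul_right m hordc) hfib
    have hdvdm : ((p : ℤ) : MonoidAlgebra ℤ G) ^ m ∣ (of ℤ G g₀ - 1) ^ fib.card := by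
      obtain ⟨e, he⟩ : ∃ e, fib.card = orderOf g₀ * m + e :=
        ⟨fib.card - orderOf g₀ * m, by omega⟩
      rw [he, pow_add, pow_mul]
      exact ((pow_dvd_pow_of_dvd hdvd0 m).mul_right _)
    rw [hsplit, hfprod]
    exact hdvdm.mul_right _
  have := h2 h1
  rwa [Ideal.mem_span_singleton] at this

lemma eq_zero_of_forall_pow_dvd (p : ℕ) (hp : p.Prime) (x : MonoidAlgebra ℤ G)
    (h : ∀ m : ℕ, ((p : ℤ) : MonoidAlgebra ℤ G) ^ m ∣ x) : x = 0 := by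
  have hcoeff : ∀ g : G, x.coeff g = 0 := by
    intro g
    by_contra hg
    set m := (x.coeff g).natAbs with hm
    obtain ⟨z, hz⟩ := h m
    have hxg : x.coeff g = (p : ℤ) ^ m * z.coeff g := by
      have hs : ((p : ℤ) : MonoidAlgebra ℤ G) ^ m = MonoidAlgebra.single 1 ((p : ℤ) ^ m) := by
        rw [← Int.cast_pow, MonoidAlgebra.intCast_def, Int.cast_id]
      rw [hz, hs, MonoidAlgebra.coeff_single_one_mul]
    have hdvd : (p : ℤ) ^ m ∣ x.coeff g := ⟨z.coeff g, hxg⟩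
    have hdvdn : p ^ m ∣ (x.coeff g).natAbs := by
      have h2 := Int.natAbs_dvd_natAbs.mpr hdvd
      rwa [Int.natAbs_pow, Int.natAbs_natCast] at h2
    have hle : p ^ m ≤ (x.coeff g).natAbs :=
      Nat.le_of_dvd (Int.natAbs_pos.mpr hg) hdvdn
    have h2m : (x.coeff g).natAbs < 2 ^ m := hm ▸ Nat.lt_two_pow_self
    have h2p : 2 ^ m ≤ p ^ m := Nat.pow_le_pow_left hp.two_le m
    omega
  exact MonoidAlgebra.coeff_injective (Finsupp.ext hcoeff)

lemma fixed_eq_zero (p : ℕ) (hp : p.Prime) (b x : MonoidAlgebra ℤ G)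
    (haug : aug G b = 0) (hsupp : ∀ g ∈ b.coeff.support, ∃ a, orderOf g = p ^ a)
    (hx : x = b * x) : x = 0 := by
  classical
  have hbmem : b ∈ Ideal.span
      { y : MonoidAlgebra ℤ G | ∃ g : G, (∃ a, orderOf g = p ^ a) ∧ y = of ℤ G g - 1 } := by
    have hsum0 : ∑ g ∈ b.coeff.support, b.coeff g = 0 := by rw [← aug_eq_sum, haug]
    have hrepr : b = ∑ g ∈ b.coeff.support, b.coeff g • (of ℤ G g - 1) := by
      have h1 : ∑ g ∈ b.coeff.support, b.coeff g • (of ℤ G g - 1)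
          = (∑ g ∈ b.coeff.support, b.coeff g • of ℤ G g) - (∑ g ∈ b.coeff.support, b.coeff g) • (1 : MonoidAlgebra ℤ G) := by
        rw [Finset.sum_smul, ← Finset.sum_sub_distrib]
        exact Finset.sum_congr rfl fun g _ => by rw [smul_sub]
      rw [h1, hsum0, zero_smul, sub_zero]
      have h2 : ∀ g ∈ b.coeff.support, b.coeff g • of ℤ G g = MonoidAlgebra.single g (b.coeff g) := by
        intro g _
        rw [MonoidAlgebra.of_apply, MonoidAlgebra.smul_single', mul_one]
      rw [Finset.sum_congr rfl h2]
      exact (MonoidAlgebra.sum_coeff_single b).symm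
    rw [hrepr]
    apply Submodule.sum_mem
    intro g hg
    rw [zsmul_eq_mul]
    exact Ideal.mul_mem_left _ _ (Ideal.subset_span ⟨g, hsupp g hg, rfl⟩)
  have hxn : ∀ k : ℕ, x = b ^ k * x := by
    intro k
    induction k with
    | zero => rw [pow_zero, one_mul]
    | succ k ih => rw [pow_succ, mul_assoc, ← hx]; exact ih
  apply eq_zero_of_forall_pow_dvd p hp
  intro m
  rw [hxn (Fintype.card G * (Fintype.card G * m))]
  exact (pow_dvd_pow_of_span p hp b hbmem m).mul_right x

end Aux3

section Aux4

variable {G : Type*} [CommGroup G] [Fintype G]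

lemma aug_mapDomain (f : G →* G) (x : MonoidAlgebra ℤ G) :
    aug G (mapDomainRingHom ℤ f x) = aug G x := by
  have hcomp : (aug G).comp (mapDomainRingHom ℤ f) = aug G := by
    apply MonoidAlgebra.ringHom_ext
    · intro b
      simp [Finsupp.mapDomain_single, aug_single]
    · intro a
      simp [Finsupp.mapDomain_single, aug_single]
  exact DFunLike.congr_fun hcomp x

lemma exists_E (G : Type*) [CommGroup G] [Fintype G] :
    ∃ E : ℕ → ℕ,
      (∀ p ∈ (Fintype.card G).primeFactors, ∀ g : G, ∃ a, orderOf (g ^ E p) = p ^ a) ∧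
      (∀ g : G, g ^ (∑ p ∈ (Fintype.card G).primeFactors, E p) = g) := by
  classical
  set c := Fintype.card G with hc
  have hc0 : c ≠ 0 := Fintype.card_ne_zero
  have hEex : ∀ p : ℕ, ∃ e : ℕ, p ∈ c.primeFactors →
      (e ≡ 1 [MOD p ^ c.factorization p] ∧ e ≡ 0 [MOD ordCompl[p] c]) := by
    intro p
    by_cases hp : p ∈ c.primeFactors
    · have hpp : p.Prime := Nat.prime_of_mem_primeFactors hp
      have hco : Nat.Coprime (p ^ c.factorization p) (ordCompl[p] c) :=
        Nat.Coprime.pow_left _ (Nat.coprime_ordCompl hpp hc0)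
      obtain ⟨e, he1, he2⟩ := Nat.chineseRemainder hco 1 0
      exact ⟨e, fun _ => ⟨he1, he2⟩⟩
    · exact ⟨0, fun h => absurd h hp⟩
  choose E hE using hEex
  refine ⟨E, ?_, ?_⟩
  · intro p hp g
    have hpp : p.Prime := Nat.prime_of_mem_primeFactors hp
    have hdvd : orderOf (g ^ E p) ∣ p ^ c.factorization p := by
      rw [orderOf_dvd_iff_pow_eq_one, ← pow_mul]
      apply orderOf_dvd_iff_pow_eq_one.mp
      calc orderOf g ∣ c := orderOf_dvd_card
        _ ∣ E p * p ^ c.factorization p := by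
            have h2 : ordCompl[p] c ∣ E p := (Nat.modEq_zero_iff_dvd).mp (hE p hp).2
            have h3 : c = ordCompl[p] c * p ^ c.factorization p := by
              rw [mul_comm]
              exact (Nat.ordProj_mul_ordCompl_eq_self c p).symm
            calc c = ordCompl[p] c * p ^ c.factorization p := h3
              _ ∣ E p * p ^ c.factorization p := Nat.mul_dvd_mul_right h2 _
    obtain ⟨a, -, ha⟩ := (Nat.dvd_prime_pow hpp).mp hdvd
    exact ⟨a, ha⟩
  · intro g
    have hmod : (∑ p ∈ c.primeFactors, E p) ≡ 1 [MOD c] := by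
      have hdvd : (c : ℤ) ∣ (∑ p ∈ c.primeFactors, E p : ℤ) - 1 := by
        have hcprod : (c : ℤ) = ∏ p ∈ c.primeFactors, ((p ^ c.factorization p : ℕ) : ℤ) := by
          have h1 : (∏ p ∈ c.primeFactors, p ^ c.factorization p) = c := by
            rw [← Nat.support_factorization]
            exact Nat.factorization_prod_pow_eq_self hc0
          rw [← Nat.cast_prod, h1]
        rw [hcprod]
        apply Finset.prod_dvd_of_coprime
        · intro a ha b hb hab
          have hap : a.Prime := Nat.prime_of_mem_primeFactors ha
          have hbp : b.Prime := Nat.prime_of_mem_primeFactors hb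
          have : Nat.Coprime (a ^ c.factorization a) (b ^ c.factorization b) :=
            Nat.Coprime.pow _ _ ((Nat.coprime_primes hap hbp).mpr hab)
          simp only [Function.onFun]
          exact_mod_cast this.isCoprime
        · intro q hq
          have hqp : q.Prime := Nat.prime_of_mem_primeFactors hq
          have h1 : ((q ^ c.factorization q : ℕ) : ℤ) ∣ (E q : ℤ) - 1 := by
            have := ((hE q hq).1.symm).dvd
            exact_mod_cast this
          have h2 : ∀ r ∈ c.primeFactors.erase q, ((q ^ c.factorization q : ℕ) : ℤ) ∣ (E r : ℤ) := by
            intro r hr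
            have hrP := Finset.mem_of_mem_erase hr
            have hrq : r ≠ q := Finset.ne_of_mem_erase hr
            have hrp : r.Prime := Nat.prime_of_mem_primeFactors hrP
            have hdvdnat : q ^ c.factorization q ∣ E r := by
              have hqc : q ^ c.factorization q ∣ c := Nat.ordProj_dvd c q
              have hco : Nat.Coprime (q ^ c.factorization q) (r ^ c.factorization r) :=
                Nat.Coprime.pow _ _ ((Nat.coprime_primes hqp hrp).mpr (fun h => hrq h.symm))
              have hqcompl : q ^ c.factorization q ∣ ordCompl[r] c := by
                have h5 : q ^ c.factorization q ∣ r ^ c.factorization r * ordCompl[r] c := by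
                  rw [Nat.ordProj_mul_ordCompl_eq_self c r]
                  exact hqc
                exact Nat.Coprime.dvd_of_dvd_mul_left hco h5
              exact hqcompl.trans ((Nat.modEq_zero_iff_dvd).mp (hE r hrP).2)
            exact_mod_cast Int.natCast_dvd_natCast.mpr hdvdnat
          have hsplit : (∑ p ∈ c.primeFactors, E p : ℤ) - 1
              = ((E q : ℤ) - 1) + ∑ r ∈ c.primeFactors.erase q, (E r : ℤ) := by
            push_cast
            rw [← Finset.add_sum_erase _ _ hq]
            ring
          rw [hsplit]
          exact dvd_add h1 (Finset.dvd_sum h2)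
      rw [Nat.modEq_iff_dvd]
      push_cast
      have hneg : ((1 : ℤ) - ∑ p ∈ c.primeFactors, (E p : ℤ))
          = -((∑ p ∈ c.primeFactors, (E p : ℤ)) - 1) := by ring
      rw [hneg]
      exact dvd_neg.mpr hdvd
    have horddvd : orderOf g ∣ c := orderOf_dvd_card
    calc g ^ (∑ p ∈ c.primeFactors, E p) = g ^ 1 := by
          rw [pow_eq_pow_iff_modEq]
          exact (hmod.of_dvd horddvd)
      _ = g := pow_one g

end Aux4

lemma mapDomainRingHom_of' {G : Type*} [CommGroup G] (f : G →* G) (g : G) :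
    mapDomainRingHom ℤ f (of ℤ G g) = of ℤ G (f g) := by
  simp [MonoidAlgebra.of_apply]

/-- Parmenter–Passi–Sehgal: for a finite abelian group `G` with
primary decomposition `G = ⊕_p G_p` (where `G_p` consists of the elements of
`p`-power order), the nilpotent residue `∩_n I(ℤ[G])^n` equals the ideal
`Σ_{p≠q} I(ℤ[G_p])·I(ℤ[G_q])·ℤ[G]`, i.e. the ideal of `ℤ[G]` generated by the
products `(g−1)(h−1)` with `g` of `p`-power order, `h` of `q`-power order and
`p ≠ q` primes. In particular, if `G` is a `p`-group for a single prime `p`, the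
nilpotent residue is zero. -/
theorem stmt7 (G : Type*) [CommGroup G] [Fintype G] :
    ((⨅ n : ℕ, augIdeal G ^ n) =
      Ideal.span { x : MonoidAlgebra ℤ G |
        ∃ p q : ℕ, p.Prime ∧ q.Prime ∧ p ≠ q ∧
          ∃ g h : G, (∃ a : ℕ, orderOf g = p ^ a) ∧ (∃ b : ℕ, orderOf h = q ^ b) ∧
            x = (MonoidAlgebra.of ℤ G g - 1) * (MonoidAlgebra.of ℤ G h - 1) }) ∧
    (∀ p : ℕ, p.Prime → (∀ g : G, ∃ n : ℕ, orderOf g = p ^ n) →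
      (⨅ n : ℕ, augIdeal G ^ n) = ⊥) := by
  classical
  obtain ⟨E, hE1, hE2⟩ := exists_E G
  set P := (Fintype.card G).primeFactors with hPdef
  have hJ : (⨅ n : ℕ, augIdeal G ^ n) = Ideal.span (Jset G) := by
    apply le_antisymm
    · -- hard direction
      intro x hx
      haveI hfin : Module.Finite ℤ (MonoidAlgebra ℤ G) :=
        Module.Finite.equiv (MonoidAlgebra.coeffLinearEquiv ℤ (S := ℤ) (M := G)).symm
      haveI hNoeth : IsNoetherianRing (MonoidAlgebra ℤ G) := by
        rw [isNoetherianRing_iff]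
        exact isNoetherian_of_tower ℤ
          (inferInstance : IsNoetherian ℤ (MonoidAlgebra ℤ G))
      have hmem' : x ∈ (⨅ i : ℕ, augIdeal G ^ i •
          (⊤ : Submodule (MonoidAlgebra ℤ G) (MonoidAlgebra ℤ G))) := by
        rw [Submodule.mem_iInf]
        intro i
        rw [Ideal.smul_eq_mul, Ideal.mul_top]
        exact (Submodule.mem_iInf _).mp hx i
      obtain ⟨r, hr⟩ := (Ideal.mem_iInf_smul_pow_eq_bot_iff (augIdeal G) x).mp hmem'
      have hax : (r : MonoidAlgebra ℤ G) * x = x := by rw [← smul_eq_mul]; exact hr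
      have haugx : aug G x = 0 := by
        have h1 : x ∈ augIdeal G ^ 1 := (Submodule.mem_iInf _).mp hx 1
        rw [pow_one, mem_augIdeal_iff] at h1
        exact h1
      have hphi : ∀ p ∈ P, mapDomainRingHom ℤ (powMonoidHom (E p) : G →* G) x = 0 := by
        intro p hp
        have hpp := Nat.prime_of_mem_primeFactors hp
        apply fixed_eq_zero p hpp (mapDomainRingHom ℤ (powMonoidHom (E p) : G →* G) r)
        · rw [aug_mapDomain]
          exact (mem_augIdeal_iff _).mp r.2
        · intro g hg
          rw [MonoidAlgebra.mapDomainRingHom_apply] at hg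
          obtain ⟨g₀, -, hgeq⟩ := Finset.mem_image.mp (Finsupp.mapDomain_support hg)
          have : g = g₀ ^ E p := by rw [← hgeq]; rfl
          rw [this]
          exact hE1 p hp g₀
        · rw [← map_mul]
          exact (congrArg _ hax).symm
      have main : ∀ y : MonoidAlgebra ℤ G,
          y - (aug G y) • (1 : MonoidAlgebra ℤ G)
            - ∑ p ∈ P, (mapDomainRingHom ℤ (powMonoidHom (E p) : G →* G) y - (aug G y) • 1)
            ∈ Ideal.span (Jset G) := by
        intro y
        induction y using MonoidAlgebra.induction_on with
        | of g =>
          have hgoal : of ℤ G g - (aug G (of ℤ G g)) • (1 : MonoidAlgebra ℤ G)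
              - ∑ p ∈ P, (mapDomainRingHom ℤ (powMonoidHom (E p) : G →* G) (of ℤ G g)
                - (aug G (of ℤ G g)) • 1)
              = of ℤ G (∏ p ∈ P, g ^ E p) - 1 - ∑ p ∈ P, (of ℤ G (g ^ E p) - 1) := by
            rw [aug_of, one_smul]
            have hprod : (∏ p ∈ P, g ^ E p) = g := by
              rw [Finset.prod_pow_eq_pow_sum]
              exact hE2 g
            rw [hprod]
            congr 1
            apply Finset.sum_congr rfl
            intro p _
            rw [mapDomainRingHom_of']
            rfl
          rw [hgoal]
          exact dsum_mem (fun p => g ^ E p) P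
            (fun q hq => Nat.prime_of_mem_primeFactors hq) (fun q hq => hE1 q hq g)
        | add f h hf hh =>
          have hsum : ∑ p ∈ P, (mapDomainRingHom ℤ (powMonoidHom (E p) : G →* G) (f + h)
              - (aug G (f + h)) • (1 : MonoidAlgebra ℤ G))
              = (∑ p ∈ P, (mapDomainRingHom ℤ (powMonoidHom (E p) : G →* G) f
                  - (aug G f) • (1 : MonoidAlgebra ℤ G)))
                + ∑ p ∈ P, (mapDomainRingHom ℤ (powMonoidHom (E p) : G →* G) h
                  - (aug G h) • (1 : MonoidAlgebra ℤ G)) := by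
            rw [← Finset.sum_add_distrib]
            refine Finset.sum_congr rfl fun p _ => ?_
            rw [map_add, map_add, add_smul]
            abel
          have heq : f + h - (aug G (f + h)) • (1 : MonoidAlgebra ℤ G)
              - ∑ p ∈ P, (mapDomainRingHom ℤ (powMonoidHom (E p) : G →* G) (f + h)
                - (aug G (f + h)) • 1)
              = (f - (aug G f) • (1 : MonoidAlgebra ℤ G)
                - ∑ p ∈ P, (mapDomainRingHom ℤ (powMonoidHom (E p) : G →* G) f - (aug G f) • 1))
              + (h - (aug G h) • (1 : MonoidAlgebra ℤ G)
                - ∑ p ∈ P, (mapDomainRingHom ℤ (powMonoidHom (E p) : G →* G) h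
                  - (aug G h) • 1)) := by
            rw [hsum, map_add, add_smul]
            abel
          rw [heq]
          exact add_mem hf hh
        | smul z f hf =>
          have h1 : aug G (z • f) = z * aug G f := by
            rw [zsmul_eq_mul, map_mul, map_intCast, Int.cast_id]
          have h2 : ∑ p ∈ P, (mapDomainRingHom ℤ (powMonoidHom (E p) : G →* G) (z • f)
              - (aug G (z • f)) • (1 : MonoidAlgebra ℤ G))
              = z • ∑ p ∈ P, (mapDomainRingHom ℤ (powMonoidHom (E p) : G →* G) f
                - (aug G f) • (1 : MonoidAlgebra ℤ G)) := by
            rw [Finset.smul_sum]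
            refine Finset.sum_congr rfl fun p _ => ?_
            rw [smul_sub, h1, mul_smul]
            congr 1
            rw [zsmul_eq_mul, zsmul_eq_mul, map_mul, map_intCast]
          have heq : z • f - (aug G (z • f)) • (1 : MonoidAlgebra ℤ G)
              - ∑ p ∈ P, (mapDomainRingHom ℤ (powMonoidHom (E p) : G →* G) (z • f)
                - (aug G (z • f)) • 1)
              = z • (f - (aug G f) • (1 : MonoidAlgebra ℤ G)
                - ∑ p ∈ P, (mapDomainRingHom ℤ (powMonoidHom (E p) : G →* G) f
                  - (aug G f) • 1)) := by
            rw [h2, h1, mul_smul, ← smul_sub, ← smul_sub]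
          rw [heq, zsmul_eq_mul]
          exact Ideal.mul_mem_left _ _ hf
      have hfinal := main x
      have hsum0 : ∑ p ∈ P, (mapDomainRingHom ℤ (powMonoidHom (E p) : G →* G) x
          - (aug G x) • (1 : MonoidAlgebra ℤ G)) = 0 :=
        Finset.sum_eq_zero fun p hp => by
          rw [hphi p hp, haugx, zero_smul, sub_zero]
      rw [hsum0, sub_zero, haugx, zero_smul, sub_zero] at hfinal
      exact hfinal
    · -- easy direction
      rw [Ideal.span_le]
      rintro x ⟨p, q, hp, hq, hpq, g, h, ⟨a, ha⟩, ⟨b, hb⟩, rfl⟩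
      rw [SetLike.mem_coe, Submodule.mem_iInf]
      intro n
      have hco : IsCoprime ((orderOf g : ℤ) ^ n) ((orderOf h : ℤ) ^ n) := by
        rw [ha, hb]
        have hcop : Nat.Coprime ((p ^ a) ^ n) ((q ^ b) ^ n) :=
          Nat.Coprime.pow _ _ (Nat.Coprime.pow _ _ ((Nat.coprime_primes hp hq).mpr hpq))
        exact_mod_cast hcop.isCoprime
      obtain ⟨s, t, hst⟩ := hco
      have hone : ((s * (orderOf g : ℤ) ^ n + t * (orderOf h : ℤ) ^ n : ℤ) :
          MonoidAlgebra ℤ G) = 1 := by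
        rw [hst]
        exact Int.cast_one
      have hm1 : (((orderOf g : ℤ) ^ n : ℤ) : MonoidAlgebra ℤ G)
          * ((of ℤ G g - 1) * (of ℤ G h - 1)) ∈ augIdeal G ^ n := by
        apply Ideal.pow_le_pow_right (by omega : n ≤ n + 1 + 1)
        have hmm := Ideal.mul_mem_mul (ord_pow_mul_mem g n) (of_sub_one_mem h)
        rw [← pow_succ] at hmm
        have heq : (((orderOf g : ℤ) ^ n : ℤ) : MonoidAlgebra ℤ G)
            * ((of ℤ G g - 1) * (of ℤ G h - 1))
            = (((orderOf g : ℤ) : MonoidAlgebra ℤ G) ^ n * (of ℤ G g - 1)) * (of ℤ G h - 1) := by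
          push_cast
          ring
        rw [heq]
        exact hmm
      have hm2 : (((orderOf h : ℤ) ^ n : ℤ) : MonoidAlgebra ℤ G)
          * ((of ℤ G g - 1) * (of ℤ G h - 1)) ∈ augIdeal G ^ n := by
        apply Ideal.pow_le_pow_right (by omega : n ≤ n + 1 + 1)
        have hmm := Ideal.mul_mem_mul (of_sub_one_mem g) (ord_pow_mul_mem h n)
        rw [← pow_succ'] at hmm
        have heq : (((orderOf h : ℤ) ^ n : ℤ) : MonoidAlgebra ℤ G)
            * ((of ℤ G g - 1) * (of ℤ G h - 1))
            = (of ℤ G g - 1) * (((orderOf h : ℤ) : MonoidAlgebra ℤ G) ^ n * (of ℤ G h - 1)) := by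
          push_cast
          ring
        rw [heq]
        exact hmm
      have hxeq : (of ℤ G g - 1) * (of ℤ G h - 1)
          = (s : MonoidAlgebra ℤ G) * ((((orderOf g : ℤ) ^ n : ℤ) : MonoidAlgebra ℤ G)
              * ((of ℤ G g - 1) * (of ℤ G h - 1)))
            + (t : MonoidAlgebra ℤ G) * ((((orderOf h : ℤ) ^ n : ℤ) : MonoidAlgebra ℤ G)
              * ((of ℤ G g - 1) * (of ℤ G h - 1))) := by
        have h0 : (of ℤ G g - 1) * (of ℤ G h - 1)
            = ((s * (orderOf g : ℤ) ^ n + t * (orderOf h : ℤ) ^ n : ℤ) : MonoidAlgebra ℤ G)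
              * ((of ℤ G g - 1) * (of ℤ G h - 1)) := by
          rw [hone, one_mul]
        conv_lhs => rw [h0]
        push_cast
        ring
      rw [hxeq]
      exact add_mem (Ideal.mul_mem_left _ _ hm1) (Ideal.mul_mem_left _ _ hm2)
  constructor
  · exact hJ
  · intro p hp hall
    rw [hJ]
    apply le_antisymm _ bot_le
    rw [Ideal.span_le]
    rintro x ⟨r, q, hr, hq, hrq, g, h, ⟨a, ha⟩, ⟨b, hb⟩, rfl⟩
    rw [SetLike.mem_coe, Submodule.mem_bot]
    by_cases hg1 : g = 1
    · rw [hg1, map_one, sub_self, zero_mul]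
    by_cases hh1 : h = 1
    · rw [hh1, map_one, sub_self, mul_zero]
    exfalso
    obtain ⟨ng, hng⟩ := hall g
    obtain ⟨nh, hnh⟩ := hall h
    have ha0 : a ≠ 0 := by
      intro h0
      rw [h0, pow_zero, orderOf_eq_one_iff] at ha
      exact hg1 ha
    have hng0 : ng ≠ 0 := by
      intro h0
      rw [h0, pow_zero, orderOf_eq_one_iff] at hng
      exact hg1 hng
    have hb0 : b ≠ 0 := by
      intro h0
      rw [h0, pow_zero, orderOf_eq_one_iff] at hb
      exact hh1 hb
    have hnh0 : nh ≠ 0 := by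
      intro h0
      rw [h0, pow_zero, orderOf_eq_one_iff] at hnh
      exact hh1 hnh
    have hrp : r = p := by
      have h1 : r ∣ p ^ ng := by
        rw [← hng, ha]
        exact dvd_pow_self r ha0
      exact (Nat.prime_dvd_prime_iff_eq hr hp).mp (hr.dvd_of_dvd_pow h1)
    have hqp : q = p := by
      have h1 : q ∣ p ^ nh := by
        rw [← hnh, hb]
        exact dvd_pow_self q hb0
      exact (Nat.prime_dvd_prime_iff_eq hq hp).mp (hq.dvd_of_dvd_pow h1)
    exact hrq (hrp.trans hqp.symm)
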